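/- For all n ≥ 5, the graceful chromatic number of the triangular ladder TL_n equals 7. -/
import Mathlib

/-- A graceful `k`-coloring of `G`: a proper vertex coloring with colors in
`{1, ..., k}` whose induced edge coloring `f*(uv) = |f u - f v|` is a proper
edge coloring. -/
def IsGracefulColoring {V : Type*} (G : SimpleGraph V) (k : ℕ) (f : V → ℕ) : Prop :=
  (∀ v, 1 ≤ f v ∧ f v ≤ k) ∧
  (∀ ⦃u v⦄, G.Adj u v → f u ≠ f v) ∧
  (∀ ⦃u v w⦄, G.Adj u v → G.Adj u w → v ≠ w →
    ((f u : ℤ) - f v).natAbs ≠ ((f u : ℤ) - f w).natAbs)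

/-- The graceful chromatic number: the least `k` admitting a graceful `k`-coloring. -/
noncomputable def gracefulChromaticNumber {V : Type*} (G : SimpleGraph V) : ℕ :=
  sInf {k | ∃ f : V → ℕ, IsGracefulColoring G k f}

/-- The triangular ladder `TL_n`: the closed ladder together with the diagonal
edges `x_i y_{i+1}` (row `0` is `x`, row `1` is `y`). -/
def triangularLadder (n : ℕ) : SimpleGraph (Fin 2 × Fin n) :=
  SimpleGraph.fromRel (fun a b =>
    (a.1 = b.1 ∧ a.2.val + 1 = b.2.val) ∨
    (a.2 = b.2 ∧ a.1 ≠ b.1) ∨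
    (a.1 = 0 ∧ b.1 = 1 ∧ a.2.val + 1 = b.2.val))

/- ### Auxiliary machinery -/

lemma tl_adj_iff (n : ℕ) (a b : Fin 2 × Fin n) : (triangularLadder n).Adj a b ↔ a ≠ b ∧
    (((a.1 = b.1 ∧ a.2.val + 1 = b.2.val) ∨
    (a.2 = b.2 ∧ a.1 ≠ b.1) ∨
    (a.1 = 0 ∧ b.1 = 1 ∧ a.2.val + 1 = b.2.val)) ∨
    ((b.1 = a.1 ∧ b.2.val + 1 = a.2.val) ∨
    (b.2 = a.2 ∧ b.1 ≠ a.1) ∨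
    (b.1 = 0 ∧ a.1 = 1 ∧ b.2.val + 1 = a.2.val))) := by
  rw [triangularLadder, SimpleGraph.fromRel_adj]

lemma adj_elim {n : ℕ} {a b : Fin 2 × Fin n} (h : (triangularLadder n).Adj a b) :
    (a.1.val = b.1.val ∧ (a.2.val + 1 = b.2.val ∨ b.2.val + 1 = a.2.val)) ∨
    (a.2.val = b.2.val ∧ a.1.val ≠ b.1.val) ∨
    (a.1.val = 0 ∧ b.1.val = 1 ∧ a.2.val + 1 = b.2.val) ∨
    (a.1.val = 1 ∧ b.1.val = 0 ∧ b.2.val + 1 = a.2.val) := by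
  rw [tl_adj_iff] at h
  obtain ⟨-, h⟩ := h
  simp only [Fin.ext_iff, Prod.ext_iff, ne_eq, Fin.val_zero, Fin.val_one] at h ⊢
  omega

lemma vne {n : ℕ} {r s : Fin 2} {i j : Fin n} (h : r.val ≠ s.val ∨ i.val ≠ j.val) :
    ((r, i) : Fin 2 × Fin n) ≠ (s, j) := by
  intro he
  injection he with h1 h2
  rw [h1, h2] at h
  omega

lemma vnemk {n : ℕ} {r s : Fin 2} {i j : ℕ} {pi : i < n} {pj : j < n}
    (h : r.val ≠ s.val ∨ i ≠ j) :
    ((r, ⟨i, pi⟩) : Fin 2 × Fin n) ≠ (s, ⟨j, pj⟩) := by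
  intro he
  injection he with h1 h2
  simp only [Fin.mk.injEq] at h2
  rw [h1, h2] at h
  omega

lemma adj_row (n : ℕ) (r : Fin 2) (i j : Fin n) (h : i.val + 1 = j.val) :
    (triangularLadder n).Adj (r, i) (r, j) := by
  rw [tl_adj_iff]
  exact ⟨vne (Or.inr (by omega)), Or.inl (Or.inl ⟨rfl, h⟩)⟩

lemma adj_rung (n : ℕ) (i : Fin n) : (triangularLadder n).Adj (0, i) (1, i) := by
  rw [tl_adj_iff]
  refine ⟨fun he => ?_, Or.inl (Or.inr (Or.inl ⟨rfl, show (0:Fin 2) ≠ 1 by decide⟩))⟩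
  injection he with h1 _
  exact absurd h1 (by decide)

lemma adj_diag (n : ℕ) (i j : Fin n) (h : i.val + 1 = j.val) :
    (triangularLadder n).Adj (0, i) (1, j) := by
  rw [tl_adj_iff]
  refine ⟨fun he => ?_, Or.inl (Or.inr (Or.inr ⟨rfl, rfl, h⟩))⟩
  injection he with h1 _
  exact absurd h1 (by decide)

/- ### The periodic 7-coloring -/

def gg (r i : ℕ) : ℕ :=
  if r = 0 then (if i % 3 = 0 then 1 else if i % 3 = 1 then 3 else 6)
  else (if i % 3 = 0 then 5 else if i % 3 = 1 then 7 else 2)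

lemma gg_vals (r i : ℕ) (hr : r < 2) :
    (r = 0 ∧ i % 3 = 0 ∧ gg r i = 1) ∨ (r = 0 ∧ i % 3 = 1 ∧ gg r i = 3) ∨
    (r = 0 ∧ i % 3 = 2 ∧ gg r i = 6) ∨ (r = 1 ∧ i % 3 = 0 ∧ gg r i = 5) ∨
    (r = 1 ∧ i % 3 = 1 ∧ gg r i = 7) ∨ (r = 1 ∧ i % 3 = 2 ∧ gg r i = 2) := by
  unfold gg
  split_ifs <;> omega

lemma upper7 (n : ℕ) : IsGracefulColoring (triangularLadder n) 7
    (fun v => gg v.1.val v.2.val) := by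
  refine ⟨?_, ?_, ?_⟩
  · rintro ⟨r, i⟩
    have G := gg_vals r.val i.val r.isLt
    dsimp only
    omega
  · rintro ⟨r, i⟩ ⟨s, j⟩ h
    have H := adj_elim h
    have G1 := gg_vals r.val i.val r.isLt
    have G2 := gg_vals s.val j.val s.isLt
    dsimp only at H ⊢
    omega
  · rintro ⟨r, i⟩ ⟨s, j⟩ ⟨t, k⟩ h1 h2 hvw
    have H1 := adj_elim h1
    have H2 := adj_elim h2
    have hvw2 : s.val ≠ t.val ∨ j.val ≠ k.val := by
      by_contra hc
      push_neg at hc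
      exact hvw (by rw [Prod.ext_iff, Fin.ext_iff, Fin.ext_iff]; exact hc)
    have G1 := gg_vals r.val i.val r.isLt
    have G2 := gg_vals s.val j.val s.isLt
    have G3 := gg_vals t.val k.val t.isLt
    dsimp only at H1 H2 ⊢
    omega

/- ### The impossibility of a graceful 6-coloring -/

set_option maxRecDepth 10000 in
set_option synthInstance.maxSize 2000 in
lemma key : ∀ a0 ∈ ([1,2,3,4,5,6] : List ℕ),
    ∀ b0 ∈ ([1,2,3,4,5,6] : List ℕ),
    a0 ≠ b0 →
    ∀ a1 ∈ ([1,2,3,4,5,6] : List ℕ),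
    a0 ≠ a1 →
    ((a0:ℤ) - b0).natAbs ≠ ((a0:ℤ) - a1).natAbs →
    ∀ b1 ∈ ([1,2,3,4,5,6] : List ℕ),
    b0 ≠ b1 →
    a0 ≠ b1 →
    a1 ≠ b1 →
    ((a0:ℤ) - b0).natAbs ≠ ((a0:ℤ) - b1).natAbs →
    ((a0:ℤ) - a1).natAbs ≠ ((a0:ℤ) - b1).natAbs →
    ((b0:ℤ) - a0).natAbs ≠ ((b0:ℤ) - b1).natAbs →
    ((a1:ℤ) - a0).natAbs ≠ ((a1:ℤ) - b1).natAbs →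
    ((b1:ℤ) - a0).natAbs ≠ ((b1:ℤ) - b0).natAbs →
    ((b1:ℤ) - a0).natAbs ≠ ((b1:ℤ) - a1).natAbs →
    ((b1:ℤ) - b0).natAbs ≠ ((b1:ℤ) - a1).natAbs →
    ∀ a2 ∈ ([1,2,3,4,5,6] : List ℕ),
    a1 ≠ a2 →
    ((a1:ℤ) - a0).natAbs ≠ ((a1:ℤ) - a2).natAbs →
    ((a1:ℤ) - b1).natAbs ≠ ((a1:ℤ) - a2).natAbs →
    ∀ b2 ∈ ([1,2,3,4,5,6] : List ℕ),
    b1 ≠ b2 →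
    a1 ≠ b2 →
    a2 ≠ b2 →
    ((a1:ℤ) - a0).natAbs ≠ ((a1:ℤ) - b2).natAbs →
    ((a1:ℤ) - b1).natAbs ≠ ((a1:ℤ) - b2).natAbs →
    ((a1:ℤ) - a2).natAbs ≠ ((a1:ℤ) - b2).natAbs →
    ((b1:ℤ) - a0).natAbs ≠ ((b1:ℤ) - b2).natAbs →
    ((b1:ℤ) - b0).natAbs ≠ ((b1:ℤ) - b2).natAbs →
    ((b1:ℤ) - a1).natAbs ≠ ((b1:ℤ) - b2).natAbs →
    ((a2:ℤ) - a1).natAbs ≠ ((a2:ℤ) - b2).natAbs →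
    ((b2:ℤ) - a1).natAbs ≠ ((b2:ℤ) - b1).natAbs →
    ((b2:ℤ) - a1).natAbs ≠ ((b2:ℤ) - a2).natAbs →
    ((b2:ℤ) - b1).natAbs ≠ ((b2:ℤ) - a2).natAbs →
    ∀ a3 ∈ ([1,2,3,4,5,6] : List ℕ),
    a2 ≠ a3 →
    ((a2:ℤ) - a1).natAbs ≠ ((a2:ℤ) - a3).natAbs →
    ((a2:ℤ) - b2).natAbs ≠ ((a2:ℤ) - a3).natAbs →
    ∀ b3 ∈ ([1,2,3,4,5,6] : List ℕ),
    b2 ≠ b3 →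
    a2 ≠ b3 →
    a3 ≠ b3 →
    ((a2:ℤ) - a1).natAbs ≠ ((a2:ℤ) - b3).natAbs →
    ((a2:ℤ) - b2).natAbs ≠ ((a2:ℤ) - b3).natAbs →
    ((a2:ℤ) - a3).natAbs ≠ ((a2:ℤ) - b3).natAbs →
    ((b2:ℤ) - a1).natAbs ≠ ((b2:ℤ) - b3).natAbs →
    ((b2:ℤ) - b1).natAbs ≠ ((b2:ℤ) - b3).natAbs →
    ((b2:ℤ) - a2).natAbs ≠ ((b2:ℤ) - b3).natAbs →
    ((a3:ℤ) - a2).natAbs ≠ ((a3:ℤ) - b3).natAbs →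
    ((b3:ℤ) - a2).natAbs ≠ ((b3:ℤ) - b2).natAbs →
    ((b3:ℤ) - a2).natAbs ≠ ((b3:ℤ) - a3).natAbs →
    ((b3:ℤ) - b2).natAbs ≠ ((b3:ℤ) - a3).natAbs →
    ∀ a4 ∈ ([1,2,3,4,5,6] : List ℕ),
    a3 ≠ a4 →
    ((a3:ℤ) - a2).natAbs ≠ ((a3:ℤ) - a4).natAbs →
    ((a3:ℤ) - b3).natAbs ≠ ((a3:ℤ) - a4).natAbs →
    ∀ b4 ∈ ([1,2,3,4,5,6] : List ℕ),
    b3 ≠ b4 →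
    a3 ≠ b4 →
    a4 ≠ b4 →
    ((a3:ℤ) - a2).natAbs ≠ ((a3:ℤ) - b4).natAbs →
    ((a3:ℤ) - b3).natAbs ≠ ((a3:ℤ) - b4).natAbs →
    ((a3:ℤ) - a4).natAbs ≠ ((a3:ℤ) - b4).natAbs →
    ((b3:ℤ) - a2).natAbs ≠ ((b3:ℤ) - b4).natAbs →
    ((b3:ℤ) - b2).natAbs ≠ ((b3:ℤ) - b4).natAbs →
    ((b3:ℤ) - a3).natAbs ≠ ((b3:ℤ) - b4).natAbs →
    ((a4:ℤ) - a3).natAbs ≠ ((a4:ℤ) - b4).natAbs →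
    ((b4:ℤ) - a3).natAbs ≠ ((b4:ℤ) - b3).natAbs →
    ((b4:ℤ) - a3).natAbs ≠ ((b4:ℤ) - a4).natAbs →
    ((b4:ℤ) - b3).natAbs ≠ ((b4:ℤ) - a4).natAbs → False := by decide

lemma lower6 (n : ℕ) (hn : 5 ≤ n) (f : Fin 2 × Fin n → ℕ)
    (hf : IsGracefulColoring (triangularLadder n) 6 f) : False := by
  obtain ⟨h1, h2, h3⟩ := hf
  have p0 : (0:ℕ) < n := by omega
  have p1 : (1:ℕ) < n := by omega
  have p2 : (2:ℕ) < n := by omega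
  have p3 : (3:ℕ) < n := by omega
  have p4 : (4:ℕ) < n := by omega
  exact key (f ((0:Fin 2), (⟨0, p0⟩ : Fin n)))
    (by have := h1 ((0:Fin 2), (⟨0, p0⟩ : Fin n)); simp only [List.mem_cons, List.not_mem_nil, or_false]; omega)
    (f ((1:Fin 2), (⟨0, p0⟩ : Fin n)))
    (by have := h1 ((1:Fin 2), (⟨0, p0⟩ : Fin n)); simp only [List.mem_cons, List.not_mem_nil, or_false]; omega)
    (h2 (adj_rung n ⟨0,p0⟩))
    (f ((0:Fin 2), (⟨1, p1⟩ : Fin n)))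
    (by have := h1 ((0:Fin 2), (⟨1, p1⟩ : Fin n)); simp only [List.mem_cons, List.not_mem_nil, or_false]; omega)
    (h2 (adj_row n 0 ⟨0,p0⟩ ⟨1,p1⟩ rfl))
    (h3 (adj_rung n ⟨0,p0⟩) (adj_row n 0 ⟨0,p0⟩ ⟨1,p1⟩ rfl) (vnemk (Or.inl (by decide))))
    (f ((1:Fin 2), (⟨1, p1⟩ : Fin n)))
    (by have := h1 ((1:Fin 2), (⟨1, p1⟩ : Fin n)); simp only [List.mem_cons, List.not_mem_nil, or_false]; omega)
    (h2 (adj_row n 1 ⟨0,p0⟩ ⟨1,p1⟩ rfl))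
    (h2 (adj_diag n ⟨0,p0⟩ ⟨1,p1⟩ rfl))
    (h2 (adj_rung n ⟨1,p1⟩))
    (h3 (adj_rung n ⟨0,p0⟩) (adj_diag n ⟨0,p0⟩ ⟨1,p1⟩ rfl) (vnemk (Or.inr (by omega))))
    (h3 (adj_row n 0 ⟨0,p0⟩ ⟨1,p1⟩ rfl) (adj_diag n ⟨0,p0⟩ ⟨1,p1⟩ rfl) (vnemk (Or.inl (by decide))))
    (h3 (adj_rung n ⟨0,p0⟩).symm (adj_row n 1 ⟨0,p0⟩ ⟨1,p1⟩ rfl) (vnemk (Or.inl (by decide))))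
    (h3 (adj_row n 0 ⟨0,p0⟩ ⟨1,p1⟩ rfl).symm (adj_rung n ⟨1,p1⟩) (vnemk (Or.inl (by decide))))
    (h3 (adj_diag n ⟨0,p0⟩ ⟨1,p1⟩ rfl).symm (adj_row n 1 ⟨0,p0⟩ ⟨1,p1⟩ rfl).symm (vnemk (Or.inl (by decide))))
    (h3 (adj_diag n ⟨0,p0⟩ ⟨1,p1⟩ rfl).symm (adj_rung n ⟨1,p1⟩).symm (vnemk (Or.inr (by omega))))
    (h3 (adj_row n 1 ⟨0,p0⟩ ⟨1,p1⟩ rfl).symm (adj_rung n ⟨1,p1⟩).symm (vnemk (Or.inl (by decide))))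
    (f ((0:Fin 2), (⟨2, p2⟩ : Fin n)))
    (by have := h1 ((0:Fin 2), (⟨2, p2⟩ : Fin n)); simp only [List.mem_cons, List.not_mem_nil, or_false]; omega)
    (h2 (adj_row n 0 ⟨1,p1⟩ ⟨2,p2⟩ rfl))
    (h3 (adj_row n 0 ⟨0,p0⟩ ⟨1,p1⟩ rfl).symm (adj_row n 0 ⟨1,p1⟩ ⟨2,p2⟩ rfl) (vnemk (Or.inr (by omega))))
    (h3 (adj_rung n ⟨1,p1⟩) (adj_row n 0 ⟨1,p1⟩ ⟨2,p2⟩ rfl) (vnemk (Or.inl (by decide))))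
    (f ((1:Fin 2), (⟨2, p2⟩ : Fin n)))
    (by have := h1 ((1:Fin 2), (⟨2, p2⟩ : Fin n)); simp only [List.mem_cons, List.not_mem_nil, or_false]; omega)
    (h2 (adj_row n 1 ⟨1,p1⟩ ⟨2,p2⟩ rfl))
    (h2 (adj_diag n ⟨1,p1⟩ ⟨2,p2⟩ rfl))
    (h2 (adj_rung n ⟨2,p2⟩))
    (h3 (adj_row n 0 ⟨0,p0⟩ ⟨1,p1⟩ rfl).symm (adj_diag n ⟨1,p1⟩ ⟨2,p2⟩ rfl) (vnemk (Or.inl (by decide))))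
    (h3 (adj_rung n ⟨1,p1⟩) (adj_diag n ⟨1,p1⟩ ⟨2,p2⟩ rfl) (vnemk (Or.inr (by omega))))
    (h3 (adj_row n 0 ⟨1,p1⟩ ⟨2,p2⟩ rfl) (adj_diag n ⟨1,p1⟩ ⟨2,p2⟩ rfl) (vnemk (Or.inl (by decide))))
    (h3 (adj_diag n ⟨0,p0⟩ ⟨1,p1⟩ rfl).symm (adj_row n 1 ⟨1,p1⟩ ⟨2,p2⟩ rfl) (vnemk (Or.inl (by decide))))
    (h3 (adj_row n 1 ⟨0,p0⟩ ⟨1,p1⟩ rfl).symm (adj_row n 1 ⟨1,p1⟩ ⟨2,p2⟩ rfl) (vnemk (Or.inr (by omega))))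
    (h3 (adj_rung n ⟨1,p1⟩).symm (adj_row n 1 ⟨1,p1⟩ ⟨2,p2⟩ rfl) (vnemk (Or.inl (by decide))))
    (h3 (adj_row n 0 ⟨1,p1⟩ ⟨2,p2⟩ rfl).symm (adj_rung n ⟨2,p2⟩) (vnemk (Or.inl (by decide))))
    (h3 (adj_diag n ⟨1,p1⟩ ⟨2,p2⟩ rfl).symm (adj_row n 1 ⟨1,p1⟩ ⟨2,p2⟩ rfl).symm (vnemk (Or.inl (by decide))))
    (h3 (adj_diag n ⟨1,p1⟩ ⟨2,p2⟩ rfl).symm (adj_rung n ⟨2,p2⟩).symm (vnemk (Or.inr (by omega))))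
    (h3 (adj_row n 1 ⟨1,p1⟩ ⟨2,p2⟩ rfl).symm (adj_rung n ⟨2,p2⟩).symm (vnemk (Or.inl (by decide))))
    (f ((0:Fin 2), (⟨3, p3⟩ : Fin n)))
    (by have := h1 ((0:Fin 2), (⟨3, p3⟩ : Fin n)); simp only [List.mem_cons, List.not_mem_nil, or_false]; omega)
    (h2 (adj_row n 0 ⟨2,p2⟩ ⟨3,p3⟩ rfl))
    (h3 (adj_row n 0 ⟨1,p1⟩ ⟨2,p2⟩ rfl).symm (adj_row n 0 ⟨2,p2⟩ ⟨3,p3⟩ rfl) (vnemk (Or.inr (by omega))))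
    (h3 (adj_rung n ⟨2,p2⟩) (adj_row n 0 ⟨2,p2⟩ ⟨3,p3⟩ rfl) (vnemk (Or.inl (by decide))))
    (f ((1:Fin 2), (⟨3, p3⟩ : Fin n)))
    (by have := h1 ((1:Fin 2), (⟨3, p3⟩ : Fin n)); simp only [List.mem_cons, List.not_mem_nil, or_false]; omega)
    (h2 (adj_row n 1 ⟨2,p2⟩ ⟨3,p3⟩ rfl))
    (h2 (adj_diag n ⟨2,p2⟩ ⟨3,p3⟩ rfl))
    (h2 (adj_rung n ⟨3,p3⟩))
    (h3 (adj_row n 0 ⟨1,p1⟩ ⟨2,p2⟩ rfl).symm (adj_diag n ⟨2,p2⟩ ⟨3,p3⟩ rfl) (vnemk (Or.inl (by decide))))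
    (h3 (adj_rung n ⟨2,p2⟩) (adj_diag n ⟨2,p2⟩ ⟨3,p3⟩ rfl) (vnemk (Or.inr (by omega))))
    (h3 (adj_row n 0 ⟨2,p2⟩ ⟨3,p3⟩ rfl) (adj_diag n ⟨2,p2⟩ ⟨3,p3⟩ rfl) (vnemk (Or.inl (by decide))))
    (h3 (adj_diag n ⟨1,p1⟩ ⟨2,p2⟩ rfl).symm (adj_row n 1 ⟨2,p2⟩ ⟨3,p3⟩ rfl) (vnemk (Or.inl (by decide))))
    (h3 (adj_row n 1 ⟨1,p1⟩ ⟨2,p2⟩ rfl).symm (adj_row n 1 ⟨2,p2⟩ ⟨3,p3⟩ rfl) (vnemk (Or.inr (by omega))))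
    (h3 (adj_rung n ⟨2,p2⟩).symm (adj_row n 1 ⟨2,p2⟩ ⟨3,p3⟩ rfl) (vnemk (Or.inl (by decide))))
    (h3 (adj_row n 0 ⟨2,p2⟩ ⟨3,p3⟩ rfl).symm (adj_rung n ⟨3,p3⟩) (vnemk (Or.inl (by decide))))
    (h3 (adj_diag n ⟨2,p2⟩ ⟨3,p3⟩ rfl).symm (adj_row n 1 ⟨2,p2⟩ ⟨3,p3⟩ rfl).symm (vnemk (Or.inl (by decide))))
    (h3 (adj_diag n ⟨2,p2⟩ ⟨3,p3⟩ rfl).symm (adj_rung n ⟨3,p3⟩).symm (vnemk (Or.inr (by omega))))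
    (h3 (adj_row n 1 ⟨2,p2⟩ ⟨3,p3⟩ rfl).symm (adj_rung n ⟨3,p3⟩).symm (vnemk (Or.inl (by decide))))
    (f ((0:Fin 2), (⟨4, p4⟩ : Fin n)))
    (by have := h1 ((0:Fin 2), (⟨4, p4⟩ : Fin n)); simp only [List.mem_cons, List.not_mem_nil, or_false]; omega)
    (h2 (adj_row n 0 ⟨3,p3⟩ ⟨4,p4⟩ rfl))
    (h3 (adj_row n 0 ⟨2,p2⟩ ⟨3,p3⟩ rfl).symm (adj_row n 0 ⟨3,p3⟩ ⟨4,p4⟩ rfl) (vnemk (Or.inr (by omega))))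
    (h3 (adj_rung n ⟨3,p3⟩) (adj_row n 0 ⟨3,p3⟩ ⟨4,p4⟩ rfl) (vnemk (Or.inl (by decide))))
    (f ((1:Fin 2), (⟨4, p4⟩ : Fin n)))
    (by have := h1 ((1:Fin 2), (⟨4, p4⟩ : Fin n)); simp only [List.mem_cons, List.not_mem_nil, or_false]; omega)
    (h2 (adj_row n 1 ⟨3,p3⟩ ⟨4,p4⟩ rfl))
    (h2 (adj_diag n ⟨3,p3⟩ ⟨4,p4⟩ rfl))
    (h2 (adj_rung n ⟨4,p4⟩))
    (h3 (adj_row n 0 ⟨2,p2⟩ ⟨3,p3⟩ rfl).symm (adj_diag n ⟨3,p3⟩ ⟨4,p4⟩ rfl) (vnemk (Or.inl (by decide))))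
    (h3 (adj_rung n ⟨3,p3⟩) (adj_diag n ⟨3,p3⟩ ⟨4,p4⟩ rfl) (vnemk (Or.inr (by omega))))
    (h3 (adj_row n 0 ⟨3,p3⟩ ⟨4,p4⟩ rfl) (adj_diag n ⟨3,p3⟩ ⟨4,p4⟩ rfl) (vnemk (Or.inl (by decide))))
    (h3 (adj_diag n ⟨2,p2⟩ ⟨3,p3⟩ rfl).symm (adj_row n 1 ⟨3,p3⟩ ⟨4,p4⟩ rfl) (vnemk (Or.inl (by decide))))
    (h3 (adj_row n 1 ⟨2,p2⟩ ⟨3,p3⟩ rfl).symm (adj_row n 1 ⟨3,p3⟩ ⟨4,p4⟩ rfl) (vnemk (Or.inr (by omega))))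
    (h3 (adj_rung n ⟨3,p3⟩).symm (adj_row n 1 ⟨3,p3⟩ ⟨4,p4⟩ rfl) (vnemk (Or.inl (by decide))))
    (h3 (adj_row n 0 ⟨3,p3⟩ ⟨4,p4⟩ rfl).symm (adj_rung n ⟨4,p4⟩) (vnemk (Or.inl (by decide))))
    (h3 (adj_diag n ⟨3,p3⟩ ⟨4,p4⟩ rfl).symm (adj_row n 1 ⟨3,p3⟩ ⟨4,p4⟩ rfl).symm (vnemk (Or.inl (by decide))))
    (h3 (adj_diag n ⟨3,p3⟩ ⟨4,p4⟩ rfl).symm (adj_rung n ⟨4,p4⟩).symm (vnemk (Or.inr (by omega))))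
    (h3 (adj_row n 1 ⟨3,p3⟩ ⟨4,p4⟩ rfl).symm (adj_rung n ⟨4,p4⟩).symm (vnemk (Or.inl (by decide))))

/- ### Main theorem -/

theorem gracefulChromaticNumber_triangularLadder (n : ℕ) (hn : 5 ≤ n) :
    gracefulChromaticNumber (triangularLadder n) = 7 := by
  have h7 : 7 ∈ {k | ∃ f : Fin 2 × Fin n → ℕ, IsGracefulColoring (triangularLadder n) k f} :=
    ⟨_, upper7 n⟩
  have hns : {k | ∃ f : Fin 2 × Fin n → ℕ,
      IsGracefulColoring (triangularLadder n) k f}.Nonempty := ⟨7, h7⟩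
  rw [gracefulChromaticNumber]
  refine le_antisymm (Nat.sInf_le h7) ?_
  by_contra hlt
  push_neg at hlt
  have hmem := Nat.sInf_mem hns
  obtain ⟨f, hb, hp, hd⟩ := hmem
  refine lower6 n hn f ⟨fun v => ⟨(hb v).1, ?_⟩, hp, hd⟩
  have := (hb v).2
  omega
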